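/- Let q > 1 be an odd natural number, k a natural number, and p = 2 + 2*q*k. Then the quotient polynomial (1 - t^(p+1) - t^(q+1) + t^(p+q))/(1 - t^2) in ℤ[t] has its second-lowest-degree nonzero structure as follows: the coefficient of t^1 is 0 and the coefficient of t^(p+q-3) (the second-highest degree below the top term) has absolute value at most 1; consequently the sum of the absolute values of the coefficients adjacent to the extreme terms is at most 2. -/
import Mathlib

open Polynomial Finset

private lemma sum_coeff_aux (m n : ℕ) :
    (∑ i ∈ Finset.range m, (Polynomial.X : Polynomial ℤ) ^ (2 * i)).coeff n =
      if n % 2 = 0 ∧ n < 2 * m then 1 else 0 := by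
  induction m with
  | zero => simp
  | succ m ih =>
    rw [Finset.sum_range_succ, Polynomial.coeff_add, ih, Polynomial.coeff_X_pow]
    split_ifs <;> omega

private lemma geom_aux (m : ℕ) :
    (1 - (Polynomial.X : Polynomial ℤ) ^ 2) * ∑ i ∈ Finset.range m, Polynomial.X ^ (2 * i) =
      1 - Polynomial.X ^ (2 * m) := by
  have h2 : ∑ i ∈ Finset.range m, (Polynomial.X : Polynomial ℤ) ^ (2 * i) =
      ∑ i ∈ Finset.range m, ((Polynomial.X : Polynomial ℤ) ^ 2) ^ i := by
    simp [pow_mul]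
  rw [h2, show (2 * m) = 2 * m from rfl, pow_mul]
  linear_combination -geom_sum_mul ((Polynomial.X : Polynomial ℤ) ^ 2) m

/-- For the torus knot family `p = 2 + 2qk`, `q > 1` odd, the quotient polynomial
`(1 - t^(p+1) - t^(q+1) + t^(p+q)) / (1 - t^2)` has coefficient `0` at `t^1`
and coefficient of absolute value at most `1` at `t^(p+q-3)`, hence the sum of the
absolute values of the coefficients adjacent to the extreme terms is at most `2`. -/
theorem stmt_1 (q k : ℕ) (hq : 1 < q) (hodd : Odd q) (p : ℕ) (hp : p = 2 + 2 * q * k)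
    (Q : Polynomial ℤ)
    (hQ : (1 - Polynomial.X ^ 2) * Q =
      1 - (Polynomial.X : Polynomial ℤ) ^ (p + 1) - Polynomial.X ^ (q + 1)
        + Polynomial.X ^ (p + q)) :
    Q.coeff 1 = 0 ∧ |Q.coeff (p + q - 3)| ≤ 1 ∧ |Q.coeff 1| + |Q.coeff (p + q - 3)| ≤ 2 := by
  obtain ⟨r, hr⟩ := hodd
  obtain ⟨K, hpK⟩ : ∃ K, p = 2 + 2 * K := ⟨q * k, by rw [hp]; ring⟩
  set S1 : Polynomial ℤ := ∑ i ∈ Finset.range (r + 1), Polynomial.X ^ (2 * i) with hS1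
  set S2 : Polynomial ℤ := ∑ i ∈ Finset.range r, Polynomial.X ^ (2 * i) with hS2
  set Q' : Polynomial ℤ := S1 - S2 * Polynomial.X ^ (p + 1) with hQ'def
  have hQeq : (1 - (Polynomial.X : Polynomial ℤ) ^ 2) * Q' =
      1 - (Polynomial.X : Polynomial ℤ) ^ (p + 1) - Polynomial.X ^ (q + 1)
        + Polynomial.X ^ (p + q) := by
    have g1 := geom_aux (r + 1)
    have g2 := geom_aux r
    rw [hQ'def, mul_sub, ← mul_assoc, ← hS1, ← hS2] at *
    rw [g1, g2]
    have e1 : q + 1 = 2 * (r + 1) := by omega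
    have e2 : p + q = 2 * r + (p + 1) := by omega
    rw [e1, e2, pow_add]
    ring
  have hne : (1 - (Polynomial.X : Polynomial ℤ) ^ 2) ≠ 0 := by
    intro h
    have h0 := congrArg (fun f => Polynomial.coeff f 0) h
    simp [Polynomial.coeff_sub, Polynomial.coeff_X_pow] at h0
  have hQQ : Q = Q' := mul_left_cancel₀ hne (hQ.trans hQeq.symm)
  have hc : ∀ n : ℕ, Q.coeff n =
      (if n % 2 = 0 ∧ n < 2 * (r + 1) then (1:ℤ) else 0) -
        (if p + 1 ≤ n then (if (n - (p+1)) % 2 = 0 ∧ (n - (p+1)) < 2 * r then (1:ℤ) else 0)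
          else 0) := by
    intro n
    rw [hQQ, hQ'def, Polynomial.coeff_sub, Polynomial.coeff_mul_X_pow', hS1, hS2,
      sum_coeff_aux, sum_coeff_aux]
  have h1 : Q.coeff 1 = 0 := by
    rw [hc 1]
    split_ifs <;> first | omega | simp_all
  have h2 : Q.coeff (p + q - 3) = (if K = 0 then (1:ℤ) else 0) := by
    rw [hc (p + q - 3)]
    split_ifs <;> omega
  refine ⟨h1, ?_, ?_⟩
  · rw [h2]; split_ifs <;> norm_num
  · rw [h1, h2]; split_ifs <;> norm_num
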